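/- arXiv:1906.07313 — 2 statements merged into one kernel-verified Lean document; each statement's English description precedes it below -/
import Mathlib

section
/- Let a, b, ε > 0 be real numbers. On a probability space let Y₁, Y₂, Z₁, Z₂ be mutually independent real random variables with Y₁ ~ N(0,a), Y₂ ~ N(0,b), and Z₁, Z₂ ~ N(0,ε²). Then E[((Y₁+Z₁)+(Y₂+Z₂))²/(2(a+b))] − E[(Y₁+Y₂)²/(2(a+b))] = ε²/(a+b), while (E[(Y₁+Z₁)²/(2a)] − E[Y₁²/(2a)]) + (E[(Y₂+Z₂)²/(2b)] − E[Y₂²/(2b)]) = ε²/(2a) + ε²/(2b), and ε²/(a+b) < ε²/(2a) + ε²/(2b). That is, the change in the expected negative log pseudo-likelihood caused by the perturbation is strictly smaller for the merged (noise-injected) increment than for the two separate increments. -/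
open MeasureTheory ProbabilityTheory Real

lemma integrable_sq_exp {c : ℝ} (hc : 0 < c) :
    Integrable (fun x : ℝ => x ^ 2 * Real.exp (-c * x ^ 2)) := by
  have h := integrable_rpow_mul_exp_neg_mul_sq hc (by norm_num : (-1:ℝ) < 2)
  simpa [Real.rpow_two] using h

lemma integral_x_exp {c : ℝ} (hc : 0 < c) :
    ∫ x : ℝ, x * Real.exp (-c * x ^ 2) = 0 := by
  have hd : ∀ x : ℝ, HasDerivAt (fun x : ℝ => -(2 * c)⁻¹ * Real.exp (-c * x ^ 2))
      (x * Real.exp (-c * x ^ 2)) x := by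
    intro x
    refine (((hasDerivAt_pow 2 x).const_mul (-c)).exp.const_mul (-(2 * c)⁻¹)).congr_deriv ?_
    field_simp
    ring
  exact integral_eq_zero_of_hasDerivAt_of_integrable hd (integrable_mul_exp_neg_mul_sq hc)
    ((integrable_exp_neg_mul_sq hc).const_mul _)

lemma integral_sq_exp {c : ℝ} (hc : 0 < c) :
    ∫ x : ℝ, x ^ 2 * Real.exp (-c * x ^ 2) = Real.sqrt (π / c) / (2 * c) := by
  have hd : ∀ x : ℝ, HasDerivAt (fun x : ℝ => -(2 * c)⁻¹ * x * Real.exp (-c * x ^ 2))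
      (x ^ 2 * Real.exp (-c * x ^ 2) - (2 * c)⁻¹ * Real.exp (-c * x ^ 2)) x := by
    intro x
    have h1 : HasDerivAt (fun x : ℝ => -(2 * c)⁻¹ * x) (-(2 * c)⁻¹) x := by
      simpa using (hasDerivAt_id x).const_mul (-(2 * c)⁻¹)
    have h2 : HasDerivAt (fun x : ℝ => Real.exp (-c * x ^ 2))
        (Real.exp (-c * x ^ 2) * (-c * (2 * x))) x := by
      simpa using ((hasDerivAt_pow 2 x).const_mul (-c)).exp
    refine (h1.mul h2).congr_deriv ?_
    field_simp
    ring
  have hF : Integrable (fun x : ℝ => -(2 * c)⁻¹ * x * Real.exp (-c * x ^ 2)) := by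
    have := (integrable_mul_exp_neg_mul_sq hc).const_mul (-(2 * c)⁻¹)
    simpa [mul_assoc] using this
  have hf' : Integrable (fun x : ℝ =>
      x ^ 2 * Real.exp (-c * x ^ 2) - (2 * c)⁻¹ * Real.exp (-c * x ^ 2)) :=
    (integrable_sq_exp hc).sub ((integrable_exp_neg_mul_sq hc).const_mul _)
  have h0 := integral_eq_zero_of_hasDerivAt_of_integrable hd hf' hF
  rw [integral_sub (integrable_sq_exp hc) ((integrable_exp_neg_mul_sq hc).const_mul _),
    sub_eq_zero] at h0
  rw [h0, integral_const_mul, integral_gaussian]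
  ring
lemma gaussianPDFReal_eq {v : ℝ} (hv : 0 < v) (x : ℝ) :
    gaussianPDFReal 0 ⟨v, hv.le⟩ x = (Real.sqrt (2 * π * v))⁻¹ * Real.exp (-(2*v)⁻¹ * x ^ 2) := by
  unfold gaussianPDFReal
  norm_num
  change (√(2 * π * v))⁻¹ * rexp (-x ^ 2 / (2 * v)) = _
  congr 2
  ring

lemma var_ne_zero {v : ℝ} (hv : 0 < v) : (⟨v, hv.le⟩ : NNReal) ≠ 0 := by
  intro h
  exact hv.ne' (congrArg NNReal.toReal h)

lemma integral_gaussianReal_eq {v : ℝ} (hv : 0 < v) (g : ℝ → ℝ) :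
    ∫ x, g x ∂(gaussianReal 0 ⟨v, hv.le⟩) = ∫ x, gaussianPDFReal 0 ⟨v, hv.le⟩ x * g x := by
  rw [gaussianReal_of_var_ne_zero 0 (var_ne_zero hv)]
  unfold gaussianPDF
  have : ∀ x : ℝ, ENNReal.ofReal (gaussianPDFReal 0 ⟨v, hv.le⟩ x)
      = ((gaussianPDFReal 0 ⟨v, hv.le⟩ x).toNNReal : ENNReal) := fun x => rfl
  simp_rw [this]
  rw [integral_withDensity_eq_integral_smul
    ((measurable_gaussianPDFReal 0 ⟨v, hv.le⟩).real_toNNReal) g]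
  congr 1
  ext x
  rw [NNReal.smul_def, smul_eq_mul]
  exact congrArg (· * g x) (Real.coe_toNNReal _ (gaussianPDFReal_nonneg _ _ _))

lemma integrable_gaussianReal_iff {v : ℝ} (hv : 0 < v) (g : ℝ → ℝ) :
    Integrable g (gaussianReal 0 ⟨v, hv.le⟩)
      ↔ Integrable (fun x => gaussianPDFReal 0 ⟨v, hv.le⟩ x * g x) := by
  rw [gaussianReal_of_var_ne_zero 0 (var_ne_zero hv)]
  unfold gaussianPDF
  have : ∀ x : ℝ, ENNReal.ofReal (gaussianPDFReal 0 ⟨v, hv.le⟩ x)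
      = ((gaussianPDFReal 0 ⟨v, hv.le⟩ x).toNNReal : ENNReal) := fun x => rfl
  simp_rw [this]
  rw [integrable_withDensity_iff_integrable_smul
    ((measurable_gaussianPDFReal 0 ⟨v, hv.le⟩).real_toNNReal)]
  constructor <;> intro h <;>
  · refine h.congr (Filter.Eventually.of_forall fun x => ?_)
    have hc := Real.coe_toNNReal _ (gaussianPDFReal_nonneg 0 ⟨v, hv.le⟩ x)
    simp only [NNReal.smul_def, smul_eq_mul, hc]

lemma integral_id_gaussianReal' {v : ℝ} (hv : 0 < v) :
    ∫ x, x ∂(gaussianReal 0 ⟨v, hv.le⟩) = 0 := by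
  have h2v : (0:ℝ) < (2*v)⁻¹ := by positivity
  rw [integral_gaussianReal_eq hv]
  simp_rw [gaussianPDFReal_eq hv, mul_assoc]
  rw [integral_const_mul]
  have : ∫ x : ℝ, Real.exp (-(2*v)⁻¹ * x ^ 2) * x
      = ∫ x : ℝ, x * Real.exp (-(2*v)⁻¹ * x ^ 2) := by
    congr 1; ext x; ring
  rw [this, integral_x_exp h2v, mul_zero]

lemma integral_sq_gaussianReal' {v : ℝ} (hv : 0 < v) :
    ∫ x, x ^ 2 ∂(gaussianReal 0 ⟨v, hv.le⟩) = v := by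
  have h2v : (0:ℝ) < (2*v)⁻¹ := by positivity
  rw [integral_gaussianReal_eq hv]
  simp_rw [gaussianPDFReal_eq hv, mul_assoc]
  rw [integral_const_mul]
  have : ∫ x : ℝ, Real.exp (-(2*v)⁻¹ * x ^ 2) * x ^ 2
      = ∫ x : ℝ, x ^ 2 * Real.exp (-(2*v)⁻¹ * x ^ 2) := by
    congr 1; ext x; ring
  rw [this, integral_sq_exp h2v]
  have h1 : π / (2*v)⁻¹ = 2 * π * v := by field_simp
  have h2 : Real.sqrt (2 * π * v) ≠ 0 := by
    refine (Real.sqrt_pos.mpr ?_).ne'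
    positivity
  rw [h1]
  field_simp

lemma integrable_id_gaussianReal' {v : ℝ} (hv : 0 < v) :
    Integrable (fun x : ℝ => x) (gaussianReal 0 ⟨v, hv.le⟩) := by
  have h2v : (0:ℝ) < (2*v)⁻¹ := by positivity
  rw [integrable_gaussianReal_iff hv]
  simp_rw [gaussianPDFReal_eq hv, mul_assoc]
  refine Integrable.const_mul ?_ _
  refine (integrable_mul_exp_neg_mul_sq h2v).congr (Filter.Eventually.of_forall fun x => ?_)
  ring

lemma integrable_sq_gaussianReal' {v : ℝ} (hv : 0 < v) :
    Integrable (fun x : ℝ => x ^ 2) (gaussianReal 0 ⟨v, hv.le⟩) := by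
  have h2v : (0:ℝ) < (2*v)⁻¹ := by positivity
  rw [integrable_gaussianReal_iff hv]
  simp_rw [gaussianPDFReal_eq hv, mul_assoc]
  refine Integrable.const_mul ?_ _
  refine (integrable_sq_exp h2v).congr (Filter.Eventually.of_forall fun x => ?_)
  ring

lemma gauss_facts {Ω : Type*} [MeasurableSpace Ω] {μ : Measure Ω} {X : Ω → ℝ} {v : ℝ} (hv : 0 < v)
    (hmap : μ.map X = gaussianReal 0 ⟨v, hv.le⟩) :
    AEMeasurable X μ ∧ Integrable X μ ∧ Integrable (fun ω => X ω ^ 2) μ ∧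
      (∫ ω, X ω ∂μ) = 0 ∧ (∫ ω, X ω ^ 2 ∂μ) = v := by
  have hae : AEMeasurable X μ := by
    refine aemeasurable_of_map_neZero ⟨?_⟩
    rw [hmap]
    have := instIsProbabilityMeasureGaussianReal 0 ⟨v, hv.le⟩
    exact IsProbabilityMeasure.ne_zero _
  have hint : Integrable X μ := by
    have := (integrable_map_measure aestronglyMeasurable_id hae).mp
      (by rw [hmap]; exact integrable_id_gaussianReal' hv)
    simpa [Function.comp] using this
  have hint2 : Integrable (fun ω => X ω ^ 2) μ := by
    have := (integrable_map_measure (g := fun x : ℝ => x ^ 2)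
      (by fun_prop) hae).mp (by rw [hmap]; exact integrable_sq_gaussianReal' hv)
    exact this
  have hm : (∫ ω, X ω ∂μ) = 0 := by
    have := integral_map hae (aestronglyMeasurable_id (μ := μ.map X))
    simp only [id] at this
    rw [← this, hmap, integral_id_gaussianReal' hv]
  have hm2 : (∫ ω, X ω ^ 2 ∂μ) = v := by
    have := integral_map (φ := X) (f := fun x : ℝ => x ^ 2) hae (by fun_prop)
    rw [← this, hmap, integral_sq_gaussianReal' hv]
  exact ⟨hae, hint, hint2, hm, hm2⟩
section helper
variable {Ω : Type*} [MeasurableSpace Ω] {μ : Measure Ω} [IsProbabilityMeasure μ]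

lemma crops_add_sq_stats {X Y : Ω → ℝ} (h : IndepFun X Y μ)
    (hX : Integrable X μ) (hY : Integrable Y μ)
    (hX2 : Integrable (fun ω => X ω ^ 2) μ) (hY2 : Integrable (fun ω => Y ω ^ 2) μ)
    (hXm : ∫ ω, X ω ∂μ = 0) (hYm : ∫ ω, Y ω ∂μ = 0) :
    Integrable (fun ω => (X ω + Y ω) ^ 2) μ ∧
      ∫ ω, (X ω + Y ω) ^ 2 ∂μ = (∫ ω, X ω ^ 2 ∂μ) + ∫ ω, Y ω ^ 2 ∂μ := by
  have hmul : Integrable (fun ω => X ω * Y ω) μ := h.integrable_mul hX hY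
  have hmul0 : ∫ ω, X ω * Y ω ∂μ = 0 := by
    have := h.integral_fun_mul_eq_mul_integral hX.aestronglyMeasurable hY.aestronglyMeasurable
    simpa [hXm] using this
  have heq : (fun ω => (X ω + Y ω) ^ 2)
      = fun ω => X ω ^ 2 + (X ω * Y ω * 2 + Y ω ^ 2) := by ext ω; ring
  have hm2 : Integrable (fun ω => X ω * Y ω * 2) μ := hmul.mul_const 2
  have hrest : Integrable (fun ω => X ω * Y ω * 2 + Y ω ^ 2) μ := hm2.add hY2
  constructor
  · rw [heq]; exact hX2.add hrest
  · rw [heq, integral_add hX2 hrest, integral_add hm2 hY2, integral_mul_const, hmul0]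
    ring
end helper

/-- Two-increment instance of Proposition 2 (stability of the objective function under
Bernoulli noise injection): the perturbation-induced change in the expected negative
log pseudo-likelihood is strictly smaller for the merged increment than for the two
separate increments. -/
theorem crops_stability_two_increments
    {Ω : Type*} [MeasurableSpace Ω] (μ : Measure Ω) [IsProbabilityMeasure μ]
    (a b ε : ℝ) (ha : 0 < a) (hb : 0 < b) (hε : 0 < ε)
    (Y₁ Y₂ Z₁ Z₂ : Ω → ℝ)
    (hindep : iIndepFun ![Y₁, Y₂, Z₁, Z₂] μ)
    (hY₁ : μ.map Y₁ = gaussianReal 0 ⟨a, ha.le⟩)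
    (hY₂ : μ.map Y₂ = gaussianReal 0 ⟨b, hb.le⟩)
    (hZ₁ : μ.map Z₁ = gaussianReal 0 ⟨ε ^ 2, sq_nonneg ε⟩)
    (hZ₂ : μ.map Z₂ = gaussianReal 0 ⟨ε ^ 2, sq_nonneg ε⟩) :
    ((∫ ω, ((Y₁ ω + Z₁ ω) + (Y₂ ω + Z₂ ω)) ^ 2 / (2 * (a + b)) ∂μ)
        - ∫ ω, (Y₁ ω + Y₂ ω) ^ 2 / (2 * (a + b)) ∂μ) = ε ^ 2 / (a + b) ∧
    (((∫ ω, (Y₁ ω + Z₁ ω) ^ 2 / (2 * a) ∂μ) - ∫ ω, (Y₁ ω) ^ 2 / (2 * a) ∂μ)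
        + ((∫ ω, (Y₂ ω + Z₂ ω) ^ 2 / (2 * b) ∂μ) - ∫ ω, (Y₂ ω) ^ 2 / (2 * b) ∂μ))
      = ε ^ 2 / (2 * a) + ε ^ 2 / (2 * b) ∧
    ε ^ 2 / (a + b) < ε ^ 2 / (2 * a) + ε ^ 2 / (2 * b) := by
  have hε2 : (0:ℝ) < ε ^ 2 := pow_pos hε 2
  obtain ⟨hae1, hi1, hs1, hm1, hv1⟩ := gauss_facts ha hY₁
  obtain ⟨hae2, hi2, hs2, hm2, hv2⟩ := gauss_facts hb hY₂
  obtain ⟨hae3, hi3, hs3, hm3, hv3⟩ := gauss_facts hε2 hZ₁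
  obtain ⟨hae4, hi4, hs4, hm4, hv4⟩ := gauss_facts hε2 hZ₂
  have h01 : IndepFun Y₁ Y₂ μ := hindep.indepFun (show (0:Fin 4) ≠ 1 by decide)
  have h02 : IndepFun Y₁ Z₁ μ := hindep.indepFun (show (0:Fin 4) ≠ 2 by decide)
  have h03 : IndepFun Y₁ Z₂ μ := hindep.indepFun (show (0:Fin 4) ≠ 3 by decide)
  have h12 : IndepFun Y₂ Z₂ μ := hindep.indepFun (show (1:Fin 4) ≠ 3 by decide)
  have h21 : IndepFun Z₁ Y₂ μ := hindep.indepFun (show (2:Fin 4) ≠ 1 by decide)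
  have h23 : IndepFun Z₁ Z₂ μ := hindep.indepFun (show (2:Fin 4) ≠ 3 by decide)
  obtain ⟨hU2int, hU2⟩ := crops_add_sq_stats h02 hi1 hi3 hs1 hs3 hm1 hm3
  obtain ⟨hV2int, hV2⟩ := crops_add_sq_stats h12 hi2 hi4 hs2 hs4 hm2 hm4
  obtain ⟨hW2int, hW2⟩ := crops_add_sq_stats h01 hi1 hi2 hs1 hs2 hm1 hm2
  rw [hv1, hv3] at hU2
  rw [hv2, hv4] at hV2
  rw [hv1, hv2] at hW2
  -- cross products for the merged term
  have p1 : Integrable (fun ω => Y₁ ω * Y₂ ω) μ := h01.integrable_mul hi1 hi2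
  have p2 : Integrable (fun ω => Y₁ ω * Z₂ ω) μ := h03.integrable_mul hi1 hi4
  have p3 : Integrable (fun ω => Z₁ ω * Y₂ ω) μ := h21.integrable_mul hi3 hi2
  have p4 : Integrable (fun ω => Z₁ ω * Z₂ ω) μ := h23.integrable_mul hi3 hi4
  have e1 : ∫ ω, Y₁ ω * Y₂ ω ∂μ = 0 := by
    simpa [hm1] using h01.integral_fun_mul_eq_mul_integral hi1.aestronglyMeasurable hi2.aestronglyMeasurable
  have e2 : ∫ ω, Y₁ ω * Z₂ ω ∂μ = 0 := by
    simpa [hm1] using h03.integral_fun_mul_eq_mul_integral hi1.aestronglyMeasurable hi4.aestronglyMeasurable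
  have e3 : ∫ ω, Z₁ ω * Y₂ ω ∂μ = 0 := by
    simpa [hm3] using h21.integral_fun_mul_eq_mul_integral hi3.aestronglyMeasurable hi2.aestronglyMeasurable
  have e4 : ∫ ω, Z₁ ω * Z₂ ω ∂μ = 0 := by
    simpa [hm3] using h23.integral_fun_mul_eq_mul_integral hi3.aestronglyMeasurable hi4.aestronglyMeasurable
  have hUVeq : (fun ω => (Y₁ ω + Z₁ ω) * (Y₂ ω + Z₂ ω))
      = fun ω => Y₁ ω * Y₂ ω + (Y₁ ω * Z₂ ω + (Z₁ ω * Y₂ ω + Z₁ ω * Z₂ ω)) := by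
    ext ω; ring
  have q34 : Integrable (fun ω => Z₁ ω * Y₂ ω + Z₁ ω * Z₂ ω) μ := p3.add p4
  have q234 : Integrable (fun ω => Y₁ ω * Z₂ ω + (Z₁ ω * Y₂ ω + Z₁ ω * Z₂ ω)) μ := p2.add q34
  have hUVint : Integrable (fun ω => (Y₁ ω + Z₁ ω) * (Y₂ ω + Z₂ ω)) μ := by
    rw [hUVeq]; exact p1.add q234
  have hUV0 : ∫ ω, (Y₁ ω + Z₁ ω) * (Y₂ ω + Z₂ ω) ∂μ = 0 := by
    rw [hUVeq, integral_add p1 q234, integral_add p2 q34, integral_add p3 p4,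
      e1, e2, e3, e4]
    ring
  -- the merged square
  have hTeq : (fun ω => ((Y₁ ω + Z₁ ω) + (Y₂ ω + Z₂ ω)) ^ 2)
      = fun ω => (Y₁ ω + Z₁ ω) ^ 2
          + ((Y₁ ω + Z₁ ω) * (Y₂ ω + Z₂ ω) * 2 + (Y₂ ω + Z₂ ω) ^ 2) := by
    ext ω; ring
  have hprod2 : Integrable (fun ω => (Y₁ ω + Z₁ ω) * (Y₂ ω + Z₂ ω) * 2) μ := hUVint.mul_const 2
  have hrest : Integrable
      (fun ω => (Y₁ ω + Z₁ ω) * (Y₂ ω + Z₂ ω) * 2 + (Y₂ ω + Z₂ ω) ^ 2) μ := hprod2.add hV2int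
  have hT : ∫ ω, ((Y₁ ω + Z₁ ω) + (Y₂ ω + Z₂ ω)) ^ 2 ∂μ = (a + b) + 2 * ε ^ 2 := by
    rw [hTeq, integral_add hU2int hrest, integral_add hprod2 hV2int, integral_mul_const,
      hUV0, hU2, hV2]
    ring
  have hab : (0:ℝ) < a + b := by linarith
  refine ⟨?_, ?_, ?_⟩
  · simp_rw [integral_div]
    rw [hT, hW2]
    field_simp
    ring
  · simp_rw [integral_div]
    rw [hU2, hV2, hv1, hv2]
    field_simp
    ring
  · rw [div_add_div _ _ (by positivity : (2:ℝ)*a ≠ 0) (by positivity : (2:ℝ)*b ≠ 0),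
      div_lt_div_iff₀ hab (by positivity)]
    nlinarith [mul_pos (mul_pos hε2 ha) hb, mul_nonneg hε2.le (sq_nonneg (a - b))]
end

section
/- Let r ≥ 1 be an integer, ε > 0, and a₀, …, a_r > 0 real numbers with S = a₀ + ⋯ + a_r. On a probability space let Y₀, …, Y_r, Z₀, …, Z_r be mutually independent real random variables with Y_k ~ N(0, a_k) and Z_k ~ N(0, ε²) for each k. Then E[(∑_{k=0}^r (Y_k+Z_k))²/(2S)] − E[(∑_{k=0}^r Y_k)²/(2S)] = (r+1)ε²/(2S), while ∑_{k=0}^r (E[(Y_k+Z_k)²/(2a_k)] − E[Y_k²/(2a_k)]) = ∑_{k=0}^r ε²/(2a_k), and (r+1)ε²/(2S) < ∑_{k=0}^r ε²/(2a_k). That is, merging r+1 consecutive increments (as happens when r interior points are dropped by Bernoulli noise injection) strictly reduces the change in the expected negative log pseudo-likelihood caused by the perturbation, for any r ≥ 1. -/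
open MeasureTheory ProbabilityTheory Finset

open Real NNReal

lemma gauss_integral_repr (v : ℝ≥0) (hv : v ≠ 0) (g : ℝ → ℝ) :
    ∫ x, g x ∂(gaussianReal 0 v) = ∫ x, gaussianPDFReal 0 v x * g x := by
  rw [gaussianReal_of_var_ne_zero 0 hv]
  have h : gaussianPDF 0 v = fun x => ((gaussianPDFReal 0 v x).toNNReal : ENNReal) := rfl
  rw [h, integral_withDensity_eq_integral_smul ((measurable_gaussianPDFReal 0 v).real_toNNReal) g]
  congr 1; ext x
  rw [NNReal.smul_def, Real.coe_toNNReal _ (gaussianPDFReal_nonneg _ _ _)]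
  rfl

lemma gauss_integrable_iff (v : ℝ≥0) (hv : v ≠ 0) (g : ℝ → ℝ) :
    Integrable g (gaussianReal 0 v) ↔
      Integrable (fun x => gaussianPDFReal 0 v x * g x) := by
  rw [gaussianReal_of_var_ne_zero 0 hv]
  have h : gaussianPDF 0 v = fun x => ((gaussianPDFReal 0 v x).toNNReal : ENNReal) := rfl
  rw [h, show (fun x => gaussianPDFReal 0 v x * g x)
      = fun x => (gaussianPDFReal 0 v x).toNNReal • g x from funext fun x => by
    rw [NNReal.smul_def, Real.coe_toNNReal _ (gaussianPDFReal_nonneg _ _ _), smul_eq_mul]]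
  exact (integrable_withDensity_iff_integrable_smul
    ((measurable_gaussianPDFReal 0 v).real_toNNReal) (g := g))

lemma gauss_pdf_eq (v : ℝ≥0) (x : ℝ) :
    gaussianPDFReal 0 v x = (√(2 * π * v))⁻¹ * rexp (-(2 * (v:ℝ))⁻¹ * x ^ 2) := by
  rw [gaussianPDFReal]
  congr 1
  rw [sub_zero]
  ring_nf

lemma coe_pos_of_ne (v : ℝ≥0) (hv : v ≠ 0) : 0 < (v : ℝ) :=
  NNReal.coe_pos.mpr (pos_iff_ne_zero.mpr hv)

lemma rpow_two_eq (x : ℝ) : x ^ (2 : ℝ) = x ^ 2 := by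
  rw [show (2:ℝ) = ((2:ℕ):ℝ) by norm_num, Real.rpow_natCast]

lemma gauss_integrable_id (v : ℝ≥0) (hv : v ≠ 0) :
    Integrable (fun x : ℝ => x) (gaussianReal 0 v) := by
  rw [gauss_integrable_iff v hv]
  have hb : 0 < (2 * (v:ℝ))⁻¹ := by
    have := coe_pos_of_ne v hv; positivity
  have h : (fun x => gaussianPDFReal 0 v x * x)
      = fun x => (√(2 * π * v))⁻¹ * (x * rexp (-(2 * (v:ℝ))⁻¹ * x ^ 2)) :=
    funext fun x => by rw [gauss_pdf_eq]; ring
  rw [h]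
  exact (integrable_mul_exp_neg_mul_sq hb).const_mul _

lemma gauss_integrable_sq (v : ℝ≥0) (hv : v ≠ 0) :
    Integrable (fun x : ℝ => x ^ 2) (gaussianReal 0 v) := by
  rw [gauss_integrable_iff v hv]
  have hb : 0 < (2 * (v:ℝ))⁻¹ := by
    have := coe_pos_of_ne v hv; positivity
  have key : Integrable (fun x : ℝ => x ^ 2 * rexp (-(2 * (v:ℝ))⁻¹ * x ^ 2)) := by
    have := integrable_rpow_mul_exp_neg_mul_sq hb (by norm_num : (-1:ℝ) < 2)
    simpa only [rpow_two_eq] using this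
  have h : (fun x => gaussianPDFReal 0 v x * x ^ 2)
      = fun x => (√(2 * π * v))⁻¹ * (x ^ 2 * rexp (-(2 * (v:ℝ))⁻¹ * x ^ 2)) :=
    funext fun x => by rw [gauss_pdf_eq]; ring
  rw [h]
  exact key.const_mul _

lemma gauss_integral_id (v : ℝ≥0) (hv : v ≠ 0) :
    ∫ x, x ∂(gaussianReal 0 v) = 0 := by
  rw [gauss_integral_repr v hv]
  set f := fun x => gaussianPDFReal 0 v x * x with hf
  have hodd : ∀ x, f (-x) = - f x := fun x => by
    simp only [hf, gauss_pdf_eq, neg_sq]; ring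
  have h := integral_neg_eq_self f (volume : Measure ℝ)
  simp only [hodd, integral_neg] at h
  linarith

lemma gauss_integral_sq (v : ℝ≥0) (hv : v ≠ 0) :
    ∫ x, x ^ 2 ∂(gaussianReal 0 v) = v := by
  have hv0 := coe_pos_of_ne v hv
  have h2v : (0:ℝ) < 2 * (v:ℝ) := by linarith
  have hb : 0 < (2 * (v:ℝ))⁻¹ := by positivity
  rw [gauss_integral_repr v hv]
  have h : (fun x => gaussianPDFReal 0 v x * x ^ 2)
      = fun x => (√(2 * π * v))⁻¹ * (x ^ 2 * rexp (-(2 * (v:ℝ))⁻¹ * x ^ 2)) :=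
    funext fun x => by rw [gauss_pdf_eq]; ring
  rw [h, integral_const_mul]
  have habs : (∫ x : ℝ, x ^ 2 * rexp (-(2 * (v:ℝ))⁻¹ * x ^ 2))
      = 2 * ∫ x in Set.Ioi (0:ℝ), x ^ 2 * rexp (-(2 * (v:ℝ))⁻¹ * x ^ 2) := by
    rw [← integral_comp_abs (f := fun x => x ^ 2 * rexp (-(2 * (v:ℝ))⁻¹ * x ^ 2))]
    congr 1; funext x; rw [sq_abs]
  rw [habs]
  have hIoi : (∫ x in Set.Ioi (0:ℝ), x ^ 2 * rexp (-(2 * (v:ℝ))⁻¹ * x ^ 2))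
      = (2 * (v:ℝ))⁻¹ ^ (-((2:ℝ) + 1) / 2) * (1 / 2) * Real.Gamma (((2:ℝ) + 1) / 2) := by
    rw [← integral_rpow_mul_exp_neg_mul_rpow (by norm_num : (0:ℝ) < 2)
      (by norm_num : (-1:ℝ) < 2) hb]
    apply setIntegral_congr_fun measurableSet_Ioi
    intro x _
    simp only [rpow_two_eq]
  rw [hIoi]
  have hGamma : Real.Gamma (((2:ℝ) + 1) / 2) = (1 / 2) * √π := by
    rw [show ((2:ℝ) + 1) / 2 = 1/2 + 1 by norm_num,
      Real.Gamma_add_one (by norm_num), Real.Gamma_one_half_eq]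
  have hbpow : (2 * (v:ℝ))⁻¹ ^ (-((2:ℝ) + 1) / 2) = (2 * (v:ℝ)) ^ ((3:ℝ) / 2) := by
    rw [show (-((2:ℝ) + 1) / 2) = -((3:ℝ)/2) by norm_num,
      Real.inv_rpow h2v.le, Real.rpow_neg h2v.le, inv_inv]
  have h32 : (2 * (v:ℝ)) ^ ((3:ℝ) / 2) = √(2 * (v:ℝ)) * (2 * (v:ℝ)) := by
    rw [show ((3:ℝ)/2) = 1/2 + 1 by norm_num, Real.rpow_add h2v, Real.rpow_one,
      ← Real.sqrt_eq_rpow]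
  have hsqrt : √(2 * π * (v:ℝ)) = √π * √(2 * (v:ℝ)) := by
    rw [show 2 * π * (v:ℝ) = π * (2 * (v:ℝ)) by ring, Real.sqrt_mul Real.pi_pos.le]
  rw [hbpow, hGamma, h32, hsqrt]
  have hs : (0:ℝ) < √(2 * (v:ℝ)) := Real.sqrt_pos.mpr h2v
  have hp : (0:ℝ) < √π := Real.sqrt_pos.mpr Real.pi_pos
  field_simp

section PullBack

variable {Ω : Type*} [MeasurableSpace Ω] {μ : Measure Ω}

lemma map_gauss_aemeasurable {X : Ω → ℝ} {v : ℝ≥0}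
    (hX : μ.map X = gaussianReal 0 v) : AEMeasurable X μ :=
  aemeasurable_of_map_neZero (by rw [hX]; infer_instance)

lemma map_gauss_integrable {X : Ω → ℝ} {v : ℝ≥0} (hv : v ≠ 0)
    (hX : μ.map X = gaussianReal 0 v) : Integrable X μ := by
  have h := (integrable_map_measure (f := X) (g := fun x : ℝ => x)
    (by rw [hX]; exact aestronglyMeasurable_id) (map_gauss_aemeasurable hX)).mp
  rw [hX] at h
  exact h (gauss_integrable_id v hv)

lemma map_gauss_integrable_sq {X : Ω → ℝ} {v : ℝ≥0} (hv : v ≠ 0)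
    (hX : μ.map X = gaussianReal 0 v) : Integrable (fun ω => X ω ^ 2) μ := by
  have h := (integrable_map_measure (f := X) (g := fun x : ℝ => x ^ 2)
    (by rw [hX]; exact (continuous_pow 2).aestronglyMeasurable)
    (map_gauss_aemeasurable hX)).mp
  rw [hX] at h
  exact h (gauss_integrable_sq v hv)

lemma map_gauss_mean {X : Ω → ℝ} {v : ℝ≥0} (hv : v ≠ 0)
    (hX : μ.map X = gaussianReal 0 v) : ∫ ω, X ω ∂μ = 0 := by
  have h := integral_map (φ := X) (f := fun x : ℝ => x) (map_gauss_aemeasurable hX)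
    (by rw [hX]; exact aestronglyMeasurable_id)
  rw [hX, gauss_integral_id v hv] at h
  exact h.symm

lemma map_gauss_meansq {X : Ω → ℝ} {v : ℝ≥0} (hv : v ≠ 0)
    (hX : μ.map X = gaussianReal 0 v) : ∫ ω, X ω ^ 2 ∂μ = v := by
  have h := integral_map (φ := X) (f := fun x : ℝ => x ^ 2) (map_gauss_aemeasurable hX)
    (by rw [hX]; exact (continuous_pow 2).aestronglyMeasurable)
  rw [hX, gauss_integral_sq v hv] at h
  exact h.symm

lemma integral_sum_sq {ι : Type*} [Fintype ι] [IsProbabilityMeasure μ] (W : ι → Ω → ℝ)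
    (hint : ∀ i, Integrable (W i) μ) (hsq : ∀ i, Integrable (fun ω => W i ω ^ 2) μ)
    (hmean : ∀ i, ∫ ω, W i ω ∂μ = 0)
    (hind : ∀ i j, i ≠ j → IndepFun (W i) (W j) μ) :
    ∫ ω, (∑ i, W i ω) ^ 2 ∂μ = ∑ i, ∫ ω, W i ω ^ 2 ∂μ := by
  have hprod : ∀ i j, Integrable (fun ω => W i ω * W j ω) μ := by
    intro i j
    by_cases hij : i = j
    · subst hij; simpa [sq] using hsq i
    · exact (hind i j hij).integrable_mul (hint i) (hint j)
  calc ∫ ω, (∑ i, W i ω) ^ 2 ∂μ = ∫ ω, ∑ i, ∑ j, W i ω * W j ω ∂μ := by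
        congr 1; funext ω; rw [sq, Finset.sum_mul_sum]
    _ = ∑ i, ∑ j, ∫ ω, W i ω * W j ω ∂μ := by
        rw [integral_finset_sum univ fun i _ =>
          integrable_finset_sum univ fun j _ => hprod i j]
        exact Finset.sum_congr rfl fun i _ =>
          integral_finset_sum univ fun j _ => hprod i j
    _ = ∑ i, ∫ ω, W i ω ^ 2 ∂μ := by
        refine Finset.sum_congr rfl fun i _ => ?_
        rw [Finset.sum_eq_single i]
        · congr 1; funext ω; rw [sq]
        · intro j _ hji
          have h := (hind i j (Ne.symm hji)).integral_mul_eq_mul_integral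
            (hint i).aestronglyMeasurable (hint j).aestronglyMeasurable
          rw [show (fun ω => W i ω * W j ω) = W i * W j from rfl, h, hmean i, zero_mul]
        · intro h; exact absurd (Finset.mem_univ i) h

end PullBack


/-- General-`r` case of Proposition 2 (stability of the objective function under
Bernoulli noise injection): merging `r+1` consecutive increments strictly reduces the
perturbation-induced change in the expected negative log pseudo-likelihood. -/
theorem crops_stability_general
    {Ω : Type*} [MeasurableSpace Ω] (μ : Measure Ω) [IsProbabilityMeasure μ]
    (r : ℕ) (hr : 1 ≤ r) (ε : ℝ) (hε : 0 < ε)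
    (a : Fin (r + 1) → ℝ) (ha : ∀ k, 0 < a k)
    (Y Z : Fin (r + 1) → Ω → ℝ)
    (hindep : iIndepFun (Sum.elim Y Z) μ)
    (hY : ∀ k, μ.map (Y k) = gaussianReal 0 ⟨a k, (ha k).le⟩)
    (hZ : ∀ k, μ.map (Z k) = gaussianReal 0 ⟨ε ^ 2, sq_nonneg ε⟩) :
    ((∫ ω, (∑ k, (Y k ω + Z k ω)) ^ 2 / (2 * ∑ k, a k) ∂μ)
        - ∫ ω, (∑ k, Y k ω) ^ 2 / (2 * ∑ k, a k) ∂μ)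
      = (r + 1) * ε ^ 2 / (2 * ∑ k, a k) ∧
    (∑ k, ((∫ ω, (Y k ω + Z k ω) ^ 2 / (2 * a k) ∂μ) - ∫ ω, (Y k ω) ^ 2 / (2 * a k) ∂μ))
      = ∑ k, ε ^ 2 / (2 * a k) ∧
    (r + 1) * ε ^ 2 / (2 * ∑ k, a k) < ∑ k, ε ^ 2 / (2 * a k) := by
  have hS : 0 < ∑ k, a k := Finset.sum_pos (fun k _ => ha k) univ_nonempty
  have hε2 : (0:ℝ) < ε ^ 2 := by positivity
  -- variances
  set va : Fin (r + 1) → ℝ≥0 := fun k => ⟨a k, (ha k).le⟩ with hva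
  set vz : ℝ≥0 := ⟨ε ^ 2, sq_nonneg ε⟩ with hvz
  have hva0 : ∀ k, va k ≠ 0 := fun k h => (ha k).ne' (congrArg NNReal.toReal h)
  have hvz0 : vz ≠ 0 := fun h => hε2.ne' (congrArg NNReal.toReal h)
  -- pairwise independence
  have hpair : ∀ s t, s ≠ t → IndepFun (Sum.elim Y Z s) (Sum.elim Y Z t) μ :=
    fun s t hst => hindep.indepFun hst
  -- basic facts for each variable
  have hYint : ∀ k, Integrable (Y k) μ := fun k => map_gauss_integrable (hva0 k) (hY k)
  have hYsq : ∀ k, Integrable (fun ω => Y k ω ^ 2) μ :=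
    fun k => map_gauss_integrable_sq (hva0 k) (hY k)
  have hYmean : ∀ k, ∫ ω, Y k ω ∂μ = 0 := fun k => map_gauss_mean (hva0 k) (hY k)
  have hYvar : ∀ k, ∫ ω, Y k ω ^ 2 ∂μ = a k := fun k => map_gauss_meansq (hva0 k) (hY k)
  have hZint : ∀ k, Integrable (Z k) μ := fun k => map_gauss_integrable hvz0 (hZ k)
  have hZsq : ∀ k, Integrable (fun ω => Z k ω ^ 2) μ :=
    fun k => map_gauss_integrable_sq hvz0 (hZ k)
  have hZmean : ∀ k, ∫ ω, Z k ω ∂μ = 0 := fun k => map_gauss_mean hvz0 (hZ k)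
  have hZvar : ∀ k, ∫ ω, Z k ω ^ 2 ∂μ = ε ^ 2 := fun k => map_gauss_meansq hvz0 (hZ k)
  -- facts for the Sum-indexed family
  have hWint : ∀ s, Integrable (Sum.elim Y Z s) μ := by
    rintro (k | k); exacts [hYint k, hZint k]
  have hWsq : ∀ s, Integrable (fun ω => Sum.elim Y Z s ω ^ 2) μ := by
    rintro (k | k); exacts [hYsq k, hZsq k]
  have hWmean : ∀ s, ∫ ω, Sum.elim Y Z s ω ∂μ = 0 := by
    rintro (k | k); exacts [hYmean k, hZmean k]
  -- (1) variance of the merged sum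
  have E2 : ∫ ω, (∑ k, (Y k ω + Z k ω)) ^ 2 ∂μ = (∑ k, a k) + (r + 1) * ε ^ 2 := by
    have hrw : ∀ ω, (∑ k, (Y k ω + Z k ω)) = ∑ s, Sum.elim Y Z s ω := by
      intro ω
      simp [Fintype.sum_sum_type, Finset.sum_add_distrib]
    have h := integral_sum_sq (μ := μ) (Sum.elim Y Z) hWint hWsq hWmean
      (fun s t hst => hpair s t hst)
    simp only [hrw]
    rw [h, Fintype.sum_sum_type]
    simp only [Sum.elim_inl, Sum.elim_inr]
    rw [Finset.sum_congr rfl fun k (_ : k ∈ univ) => hYvar k,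
      Finset.sum_congr rfl fun k (_ : k ∈ univ) => hZvar k,
      Finset.sum_const, Finset.card_univ, Fintype.card_fin, nsmul_eq_mul]
    push_cast
    ring
  -- (2) variance of the unmerged sum of Y's
  have E1 : ∫ ω, (∑ k, Y k ω) ^ 2 ∂μ = ∑ k, a k := by
    have h := integral_sum_sq (μ := μ) Y hYint hYsq hYmean
      (fun i j hij => hpair (Sum.inl i) (Sum.inl j) (by simp [hij]))
    rw [h, Finset.sum_congr rfl fun k _ => hYvar k]
  -- (3) per-increment second moments
  have E3 : ∀ k, ∫ ω, (Y k ω + Z k ω) ^ 2 ∂μ = a k + ε ^ 2 := by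
    intro k
    have hind : IndepFun (Y k) (Z k) μ := hpair (Sum.inl k) (Sum.inr k) (by simp)
    have hmul : Integrable (fun ω => Y k ω * Z k ω) μ :=
      hind.integrable_mul (hYint k) (hZint k)
    have hrw : (fun ω => (Y k ω + Z k ω) ^ 2)
        = fun ω => Y k ω ^ 2 + (2 * (Y k ω * Z k ω) + Z k ω ^ 2) := funext fun ω => by ring
    have i0 : ∫ ω, (Y k ω ^ 2 + (2 * (Y k ω * Z k ω) + Z k ω ^ 2)) ∂μ
        = (∫ ω, Y k ω ^ 2 ∂μ) + ∫ ω, (2 * (Y k ω * Z k ω) + Z k ω ^ 2) ∂μ :=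
      integral_add (hYsq k) ((hmul.const_mul 2).add (hZsq k))
    have i1 : ∫ ω, (2 * (Y k ω * Z k ω) + Z k ω ^ 2) ∂μ
        = (∫ ω, 2 * (Y k ω * Z k ω) ∂μ) + ∫ ω, Z k ω ^ 2 ∂μ :=
      integral_add (hmul.const_mul 2) (hZsq k)
    have i2 : ∫ ω, Y k ω * Z k ω ∂μ = 0 := by
      rw [show (fun ω => Y k ω * Z k ω) = Y k * Z k from rfl,
        hind.integral_mul_eq_mul_integral (hYint k).aestronglyMeasurable (hZint k).aestronglyMeasurable, hYmean k, zero_mul]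
    rw [hrw, i0, i1, integral_const_mul, i2, hYvar k, hZvar k]
    ring
  refine ⟨?_, ?_, ?_⟩
  · rw [integral_div, integral_div, E1, E2]
    ring
  · refine Finset.sum_congr rfl fun k _ => ?_
    rw [integral_div, integral_div, E3 k, hYvar k]
    ring
  · -- Cauchy–Schwarz
    have hCS := Finset.sum_mul_sq_le_sq_mul_sq univ (fun k => √(a k)) (fun k => (√(a k))⁻¹)
    have h1 : (∑ k : Fin (r + 1), √(a k) * (√(a k))⁻¹) = (r : ℝ) + 1 := by
      rw [Finset.sum_congr rfl fun k (_ : k ∈ univ) =>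
        mul_inv_cancel₀ (ne_of_gt (Real.sqrt_pos.mpr (ha k)))]
      rw [Finset.sum_const, Finset.card_univ, Fintype.card_fin, nsmul_eq_mul, mul_one]
      push_cast; ring
    have h2 : ∀ k : Fin (r + 1), √(a k) ^ 2 = a k := fun k => Real.sq_sqrt (ha k).le
    have h3 : ∀ k : Fin (r + 1), ((√(a k))⁻¹) ^ 2 = (a k)⁻¹ := fun k => by
      rw [inv_pow, h2]
    rw [h1, Finset.sum_congr rfl fun k (_ : k ∈ univ) => h2 k,
      Finset.sum_congr rfl fun k (_ : k ∈ univ) => h3 k] at hCS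
    have hT : 0 < ∑ k, (a k)⁻¹ :=
      Finset.sum_pos (fun k _ => by have := ha k; positivity) univ_nonempty
    have hrhs : (∑ k, ε ^ 2 / (2 * a k)) = ε ^ 2 / 2 * ∑ k, (a k)⁻¹ := by
      rw [Finset.mul_sum]
      refine Finset.sum_congr rfl fun k _ => ?_
      have := (ha k).ne'
      field_simp
    rw [hrhs, div_lt_iff₀ (by positivity)]
    have hn : (2:ℝ) ≤ (r:ℝ) + 1 := by
      have : (1:ℝ) ≤ (r:ℝ) := by exact_mod_cast hr
      linarith
    have hCS' : ((r:ℝ) + 1) ^ 2 ≤ (∑ k, a k) * ∑ k, (a k)⁻¹ := hCS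
    have hlt : (r:ℝ) + 1 < ((r:ℝ) + 1) ^ 2 := by nlinarith [hn]
    calc ((r:ℝ) + 1) * ε ^ 2
        < ((r:ℝ) + 1) ^ 2 * ε ^ 2 := mul_lt_mul_of_pos_right hlt hε2
      _ ≤ ((∑ k, a k) * ∑ k, (a k)⁻¹) * ε ^ 2 := mul_le_mul_of_nonneg_right hCS' hε2.le
      _ = ε ^ 2 / 2 * (∑ k, (a k)⁻¹) * (2 * ∑ k, a k) := by ring
end
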